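/- arXiv:1311.5718 — 2 statements merged into one kernel-verified Lean document; each statement's English description precedes it below -/
import Mathlib

section
/- Let Φ be a crystallographic root system with positive system Φ⁺ and root order defined by α ≤ β iff β − α is a nonnegative integer combination of simple roots. If α, β, γ ∈ Φ⁺ with β + γ ∈ Φ⁺ and α ≤ β + γ, then α ≤ β, or α ≤ γ, or α = β′ + γ′ for some β′, γ′ ∈ Φ⁺ with β′ ≤ β and γ′ ≤ γ. -/
open scoped Pointwise RealInnerProductSpace

/-- A crystallographic root system together with a choice of simple system. -/
structure RootSystemData (V : Type*) [NormedAddCommGroup V] [InnerProductSpace ℝ V] where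
  Φ : Set V
  S : Set V
  finite : Φ.Finite
  ne_zero : ∀ α ∈ Φ, α ≠ 0
  reflect_mem : ∀ α ∈ Φ, ∀ β ∈ Φ, β - (2 * (inner ℝ β α : ℝ) / (inner ℝ α α : ℝ)) • α ∈ Φ
  crystal : ∀ α ∈ Φ, ∀ β ∈ Φ, ∃ m : ℤ, 2 * (inner ℝ β α : ℝ) / (inner ℝ α α : ℝ) = (m : ℝ)
  reduced : ∀ α ∈ Φ, ∀ t : ℝ, t • α ∈ Φ → t = 1 ∨ t = -1
  S_sub : S ⊆ Φ
  S_indep : LinearIndependent ℝ ((↑) : S → V)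
  decomp : ∀ α ∈ Φ, α ∈ AddSubmonoid.closure S ∨ -α ∈ AddSubmonoid.closure S

namespace RootSystemData

variable {V : Type*} [NormedAddCommGroup V] [InnerProductSpace ℝ V] (D : RootSystemData V)

/-- The positive roots. -/
def pos : Set V := {α ∈ D.Φ | α ∈ AddSubmonoid.closure D.S}

/-- The root poset order: `α ≤ β` iff `β - α` is a nonnegative integer combination
of simple roots. -/
def rle (α β : V) : Prop := β - α ∈ AddSubmonoid.closure D.S

/-- An (order) ideal of the root poset. -/
def IsIdeal (I : Set V) : Prop :=
  I ⊆ D.pos ∧ ∀ α ∈ I, ∀ β ∈ D.pos, D.rle β α → β ∈ I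

/-- The order filters complementary to a chain of ideals, with the conventions
`J 0 = Φ⁺` (as `I 0 = ∅`) and `J i = J k` for `i > k`. -/
def Jf (k : ℕ) (I : ℕ → Set V) (i : ℕ) : Set V := D.pos \ I (min i k)

/-- A geometric chain of `k` ideals in the root poset. -/
structure IsGeomChain (k : ℕ) (I : ℕ → Set V) : Prop where
  zero : I 0 = ∅
  ideal : ∀ i, 1 ≤ i → i ≤ k → D.IsIdeal (I i)
  mono : ∀ i j, i ≤ j → j ≤ k → I i ⊆ I j
  geomI : ∀ i j, i + j ≤ k → (I i + I j) ∩ D.pos ⊆ I (i + j)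
  geomJ : ∀ i j, (D.Jf k I i + D.Jf k I j) ∩ D.pos ⊆ D.Jf k I (i + j)

/-- A chain of ideals is positive if `S ⊆ I k`. -/
def IsPositiveChain (k : ℕ) (I : ℕ → Set V) : Prop := D.S ⊆ I k

/-- The set of values `r₁ + … + r_m` over all expressions `α = α₁ + … + α_m` with
`α_i ∈ I (r i)` and `1 ≤ r i ≤ k`; its least element (when it exists) is `r_α(𝓘)`. -/
def rVals (_D : RootSystemData V) (k : ℕ) (I : ℕ → Set V) (α : V) : Set ℕ :=
  {N | ∃ m : ℕ, ∃ a : Fin m → V, ∃ r : Fin m → ℕ,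
    (∀ i, 1 ≤ r i ∧ r i ≤ k ∧ a i ∈ I (r i)) ∧ (∑ i, a i) = α ∧ (∑ i, r i) = N}

/-- The extension `𝓘̲` of a geometric chain of `k` ideals to a chain of `k+1` ideals,
with `I̲_{k+1} = ⋃_{i+j=k+1} ((I_i + I_j) ∩ Φ⁺) ∪ I_k ∪ S`. -/
def Ibar (k : ℕ) (I : ℕ → Set V) : ℕ → Set V := fun i =>
  if i ≤ k then I i
  else (⋃ (p : ℕ × ℕ) (_ : p.1 + p.2 = k + 1), (I p.1 + I p.2) ∩ D.pos) ∪ I k ∪ D.S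

/-- `α` is a rank `r` indecomposable element of the chain of ideals `I`. -/
def IsIndec (k : ℕ) (I : ℕ → Set V) (r : ℕ) (α : V) : Prop :=
  α ∈ I r ∧ IsLeast (D.rVals k I α) r ∧
  (∀ i j, i + j = r → α ∉ I i + I j) ∧
  (∀ β ∈ D.pos, ∀ t, t ≤ k → IsLeast (D.rVals k I (α + β)) t → β ∈ I (t - r))

/-- The complement of the `k`-Catalan arrangement of `Φ`. -/
def catComp (k : ℕ) : Set V :=
  {x | ∀ α ∈ D.Φ, ∀ r : ℕ, r ≤ k → (inner ℝ x α : ℝ) ≠ (r : ℝ)}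

/-- A region of the `k`-Catalan arrangement: a connected component of the complement. -/
def IsRegion (k : ℕ) (R : Set V) : Prop :=
  ∃ x ∈ D.catComp k, R = connectedComponentIn (D.catComp k) x

/-- A dominant region of the `k`-Catalan arrangement. -/
def IsDomRegion (k : ℕ) (R : Set V) : Prop :=
  D.IsRegion k R ∧ ∀ x ∈ R, ∀ α ∈ D.pos, 0 < (inner ℝ x α : ℝ)

/-- The complement of the affine Coxeter arrangement of `Φ`. -/
def affComp : Set V := {x | ∀ α ∈ D.Φ, ∀ r : ℤ, (inner ℝ x α : ℝ) ≠ (r : ℝ)}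

/-- An alcove: a connected component of the complement of the affine Coxeter arrangement. -/
def IsAlcove (A : Set V) : Prop :=
  ∃ x ∈ D.affComp, A = connectedComponentIn D.affComp x

/-- The hyperplane `H_α^r` supports a facet of `R`. -/
def IsWall (_D : RootSystemData V) (R : Set V) (α : V) (r : ℝ) : Prop :=
  ∃ x, (inner ℝ x α : ℝ) = r ∧ ∃ ε > 0, ∀ y, (inner ℝ y α : ℝ) = r → dist y x < ε → y ∈ closure R

/-- `H_α^r` is a ceiling of the dominant region (or alcove) `R`: a wall not through
the origin with `R` on the same side as the origin. -/
def IsCeiling (R : Set V) (α : V) (r : ℝ) : Prop :=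
  D.IsWall R α r ∧ 0 < r ∧ ∀ x ∈ R, (inner ℝ x α : ℝ) < r

/-- `H_α^r` is a floor of the dominant region (or alcove) `R`: a wall not through
the origin separating `R` from the origin. -/
def IsFloor (R : Set V) (α : V) (r : ℝ) : Prop :=
  D.IsWall R α r ∧ 0 < r ∧ ∀ x ∈ R, r < (inner ℝ x α : ℝ)

/-- The chain of ideals `θ(R)` associated to a dominant region `R`. -/
def theta (R : Set V) : ℕ → Set V := fun i =>
  {α ∈ D.pos | ∀ x ∈ R, (inner ℝ x α : ℝ) < (i : ℝ)}

/-- `B` is the maximal alcove of the (bounded) region corresponding to the positive chain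
of ideals `I`, i.e. the alcove with `r(B,α) = r_α(𝓘)` for all positive roots `α`. -/
def IsMaxAlcoveOf (k : ℕ) (I : ℕ → Set V) (B : Set V) : Prop :=
  D.IsAlcove B ∧ ∀ α ∈ D.pos, ∃ r : ℕ, IsLeast (D.rVals k I α) r ∧
    ∀ x ∈ B, ((r : ℝ) - 1 < (inner ℝ x α : ℝ) ∧ (inner ℝ x α : ℝ) < (r : ℝ))

/-- The root system `Φ` is irreducible. -/
def Irred : Prop :=
  ∀ Φ₁ Φ₂ : Set V, Φ₁ ∪ Φ₂ = D.Φ → (∀ a ∈ Φ₁, ∀ b ∈ Φ₂, (inner ℝ a b : ℝ) = 0) →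
    Φ₁ = ∅ ∨ Φ₂ = ∅

end RootSystemData

theorem exists_mem_inner_pos_sub_mem_closure {V : Type*} [NormedAddCommGroup V]
    [InnerProductSpace ℝ V] {S : Set V} {x : V}
    (hx : x ∈ AddSubmonoid.closure S) {v : V} (hv : 0 < ⟪v, x⟫) :
    ∃ s ∈ S, 0 < ⟪v, s⟫ ∧ x - s ∈ AddSubmonoid.closure S := by
  induction hx using AddSubmonoid.closure_induction with
  | mem s hs => exact ⟨s, hs, hv, by simp⟩
  | zero => simp at hv
  | add a b ha hb iha ihb =>
    rw [inner_add_right] at hv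
    rcases lt_or_ge 0 ⟪v, a⟫ with h | h
    · obtain ⟨s, hs, hvs, has⟩ := iha h
      refine ⟨s, hs, hvs, ?_⟩
      rw [← sub_add_eq_add_sub]
      exact AddSubmonoid.add_mem _ has hb
    · obtain ⟨s, hs, hvs, hbs⟩ := ihb (by linarith)
      refine ⟨s, hs, hvs, ?_⟩
      rw [add_sub_assoc]
      exact AddSubmonoid.add_mem _ ha hbs

namespace RootSystemData

variable {V : Type*} [NormedAddCommGroup V] [InnerProductSpace ℝ V] (D : RootSystemData V)

theorem neg_mem {x : V} (hx : x ∈ D.Φ) : -x ∈ D.Φ := by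
  have h := D.reflect_mem x hx x hx
  rwa [mul_div_assoc, div_self (real_inner_self_pos.2 (D.ne_zero x hx)).ne', mul_one,
    two_smul, sub_add_cancel_left] at h

theorem inner_lt_norm_mul_norm {x y : V} (hx : x ∈ D.Φ) (hy : y ∈ D.Φ) (hxy : x ≠ y) :
    ⟪x, y⟫ < ‖x‖ * ‖y‖ := by
  refine inner_lt_norm_mul_iff_real.2 fun h => hxy ?_
  have hy0 : ‖y‖ ≠ 0 := norm_ne_zero_iff.2 (D.ne_zero y hy)
  have hxy' : (‖x‖ / ‖y‖) • y = x := by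
    rw [div_eq_inv_mul, mul_smul, ← h, smul_smul, inv_mul_cancel₀ hy0, one_smul]
  rcases D.reduced y hy _ (hxy' ▸ hx) with h1 | h1
  · rwa [h1, one_smul, eq_comm] at hxy'
  · have : 0 ≤ ‖x‖ / ‖y‖ := by positivity
    linarith

/-- Two distinct roots at an acute angle differ by a root: one of the two Cartan integers
`2⟪x, y⟫ / ⟪y, y⟫`, `2⟪x, y⟫ / ⟪x, x⟫` must be `1`, since their product lies in `(0, 4)`. -/
theorem sub_mem_of_inner_pos {x y : V} (hx : x ∈ D.Φ) (hy : y ∈ D.Φ) (hxy : x ≠ y)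
    (h : 0 < ⟪x, y⟫) : x - y ∈ D.Φ := by
  have hxx : 0 < ⟪x, x⟫ := real_inner_self_pos.2 (D.ne_zero x hx)
  have hyy : 0 < ⟪y, y⟫ := real_inner_self_pos.2 (D.ne_zero y hy)
  have hcs : ⟪x, y⟫ * ⟪x, y⟫ < ⟪x, x⟫ * ⟪y, y⟫ := by
    have := D.inner_lt_norm_mul_norm hx hy hxy
    rw [real_inner_self_eq_norm_mul_norm, real_inner_self_eq_norm_mul_norm]
    nlinarith [norm_nonneg x, norm_nonneg y]
  obtain ⟨m, hm⟩ := D.crystal y hy x hx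
  obtain ⟨k, hk⟩ := D.crystal x hx y hy
  rw [real_inner_comm] at hk
  have hm' : 2 * ⟪x, y⟫ = m * ⟪y, y⟫ := (div_eq_iff hyy.ne').1 hm
  have hk' : 2 * ⟪x, y⟫ = k * ⟪x, x⟫ := (div_eq_iff hxx.ne').1 hk
  have hm1 : 1 ≤ m := by
    have : (0 : ℝ) < m := by nlinarith
    exact_mod_cast this
  have hk1 : 1 ≤ k := by
    have : (0 : ℝ) < k := by nlinarith
    exact_mod_cast this
  have hmk : m * k < 4 := by
    have : (m : ℝ) * k < 4 := by nlinarith [mul_pos hxx hyy]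
    exact_mod_cast this
  rcases (show m = 1 ∨ k = 1 by rcases lt_or_ge m 2 with h2 | h2 <;> [left; right] <;> nlinarith)
    with rfl | rfl
  · have := D.reflect_mem y hy x hx
    rwa [hm, Int.cast_one, one_smul] at this
  · have := D.neg_mem (D.reflect_mem x hx y hy)
    rwa [real_inner_comm, hk, Int.cast_one, one_smul, neg_sub] at this

theorem rle_refl (α : V) : D.rle α α := by
  simp [rle]

theorem rle_trans {α β γ : V} (hαβ : D.rle α β) (hβγ : D.rle β γ) : D.rle α γ := by
  have := AddSubmonoid.add_mem _ hβγ hαβ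
  rwa [sub_add_sub_cancel] at this

theorem rle_add_of_mem_S {s : V} (hs : s ∈ D.S) (α : V) : D.rle α (α + s) := by
  simpa [rle] using AddSubmonoid.subset_closure hs

theorem linearIndepOn_S : LinearIndepOn ℝ id D.S := D.S_indep

/-- The height of a root: a linear functional taking the value `1` on every simple root. -/
noncomputable def height : V →ₗ[ℝ] ℝ :=
  (Module.Basis.extend D.linearIndepOn_S).sumCoords

theorem height_of_mem_S {s : V} (hs : s ∈ D.S) : D.height s = 1 := by
  have := (Module.Basis.extend D.linearIndepOn_S).sumCoords_self_apply
    ⟨s, D.linearIndepOn_S.subset_extend _ hs⟩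
  rwa [Module.Basis.extend_apply_self] at this

theorem eq_zero_or_one_le_height {x : V} (hx : x ∈ AddSubmonoid.closure D.S) :
    x = 0 ∨ 1 ≤ D.height x := by
  induction hx using AddSubmonoid.closure_induction with
  | mem s hs => exact Or.inr (D.height_of_mem_S hs).ge
  | zero => exact Or.inl rfl
  | add a b _ _ iha ihb =>
    rcases iha with rfl | ha
    · simpa using ihb
    rcases ihb with rfl | hb
    · simpa using Or.inr ha
    exact Or.inr (by rw [map_add]; linarith)

theorem height_nonneg {x : V} (hx : x ∈ AddSubmonoid.closure D.S) : 0 ≤ D.height x := by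
  rcases D.eq_zero_or_one_le_height hx with rfl | h
  · simp
  · linarith

theorem one_le_height_of_mem_pos {α : V} (hα : α ∈ D.pos) : 1 ≤ D.height α :=
  (D.eq_zero_or_one_le_height hα.2).resolve_left (D.ne_zero α hα.1)

/-- Were `β - s` negative, `s - β` would be a nonzero element of `ℕS` of height `≤ 0`. -/
theorem eq_or_sub_mem_pos_of_inner_pos {β s : V} (hβ : β ∈ D.pos) (hs : s ∈ D.S)
    (h : 0 < ⟪β, s⟫) : β = s ∨ β - s ∈ D.pos := by
  by_cases hβs : β = s
  · exact Or.inl hβs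
  have hΦ := D.sub_mem_of_inner_pos hβ.1 (D.S_sub hs) hβs h
  refine Or.inr ⟨hΦ, (D.decomp _ hΦ).resolve_right fun hneg => ?_⟩
  have hsβ : s - β ≠ 0 := sub_ne_zero.2 (Ne.symm hβs)
  have h1 := (D.eq_zero_or_one_le_height (neg_sub β s ▸ hneg)).resolve_left hsβ
  rw [map_sub, D.height_of_mem_S hs] at h1
  linarith [D.one_le_height_of_mem_pos hβ]

/-- The conclusion of the theorem for `α ≤ β + γ`. -/
def SplitsAlong (α β γ : V) : Prop :=
  D.rle α β ∨ D.rle α γ ∨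
    ∃ β' γ', β' ∈ D.pos ∧ γ' ∈ D.pos ∧ α = β' + γ' ∧ D.rle β' β ∧ D.rle γ' γ

variable {D}

theorem SplitsAlong.symm {α β γ : V} (h : D.SplitsAlong α β γ) : D.SplitsAlong α γ β := by
  rcases h with h | h | ⟨β', γ', hβ', hγ', rfl, hβ'β, hγ'γ⟩
  · exact Or.inr (Or.inl h)
  · exact Or.inl h
  · exact Or.inr (Or.inr ⟨γ', β', hγ', hβ', add_comm _ _, hγ'γ, hβ'β⟩)

theorem SplitsAlong.mono_left {α β₁ β₂ γ : V} (h : D.SplitsAlong α β₁ γ)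
    (hβ : D.rle β₁ β₂) : D.SplitsAlong α β₂ γ := by
  rcases h with h | h | ⟨β', γ', hβ', hγ', rfl, hβ'β, hγ'γ⟩
  · exact Or.inl (D.rle_trans h hβ)
  · exact Or.inr (Or.inl h)
  · exact Or.inr (Or.inr ⟨β', γ', hβ', hγ', rfl, D.rle_trans hβ'β hβ, hγ'γ⟩)

variable (D)

theorem splitsAlong_of_inner_pos {α β γ : V} (hα : α ∈ D.pos) (hβ : β ∈ D.pos)
    (h : D.rle α (β + γ)) (hαβ : 0 < ⟪α, β⟫) : D.SplitsAlong α β γ := by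
  by_cases hαβ' : α = β
  · exact Or.inl (hαβ' ▸ D.rle_refl α)
  have hΦ := D.sub_mem_of_inner_pos hα.1 hβ.1 hαβ' hαβ
  rcases D.decomp _ hΦ with hpos | hneg
  · refine Or.inr (Or.inr ⟨β, α - β, hβ, ⟨hΦ, hpos⟩, by abel, D.rle_refl β, ?_⟩)
    simpa only [rle, sub_sub_eq_add_sub, add_comm γ β] using h
  · exact Or.inl (by simpa only [rle, neg_sub] using hneg)

/-- Induction on the height of `β + γ - α`. If `β + γ` is at an acute angle with `β + γ - α`,
some simple root `s` in the support of `β + γ - α` can be removed from `β` or `γ`; otherwise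
`α` is at an acute angle with `β + γ`, hence with `β` or `γ`. -/
theorem splitsAlong_of_height_lt (n : ℕ) {α β γ : V} (hα : α ∈ D.pos) (hβ : β ∈ D.pos)
    (hγ : γ ∈ D.pos) (hβγ : β + γ ∈ D.pos) (h : D.rle α (β + γ))
    (hn : D.height (β + γ - α) < n) : D.SplitsAlong α β γ := by
  induction n generalizing β γ with
  | zero => exact absurd hn (not_lt.2 (by exact_mod_cast D.height_nonneg h))
  | succ n ih =>
    rcases le_or_gt ⟪β + γ, β + γ - α⟫ 0 with hle | hlt
    · have hδ : 0 < ⟪α, β + γ⟫ := by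
        have := real_inner_self_pos.2 (D.ne_zero _ hβγ.1)
        rw [inner_sub_right] at hle
        linarith [real_inner_comm α (β + γ)]
      rw [inner_add_right] at hδ
      rcases lt_or_ge 0 ⟪α, β⟫ with hαβ | hαβ
      · exact D.splitsAlong_of_inner_pos hα hβ h hαβ
      · rw [add_comm] at h
        exact (D.splitsAlong_of_inner_pos hα hγ h (by linarith)).symm
    obtain ⟨s, hs, hβγs, hδs⟩ := exists_mem_inner_pos_sub_mem_closure h hlt
    have hβγs' : β + γ - s ∈ D.pos := by
      refine (D.eq_or_sub_mem_pos_of_inner_pos hβγ hs hβγs).resolve_left fun heq => ?_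
      have := D.height_of_mem_S hs
      rw [← heq, map_add] at this
      linarith [D.one_le_height_of_mem_pos hβ, D.one_le_height_of_mem_pos hγ]
    have step : ∀ {x y : V}, x ∈ D.pos → y ∈ D.pos → x + y = β + γ → 0 < ⟪x, s⟫ →
        D.SplitsAlong α x y := by
      intro x y hx hy hxy hxs
      have hxy' : x - s + y = β + γ - s := by rw [← hxy]; abel
      have hδ' : x - s + y - α = β + γ - α - s := by rw [hxy']; abel
      rcases D.eq_or_sub_mem_pos_of_inner_pos hx hs hxs with rfl | hx'
      · refine Or.inr (Or.inl ?_)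
        rwa [← hδ', sub_self, zero_add] at hδs
      · refine (ih hx' hy (hxy' ▸ hβγs') (by rwa [rle, hδ']) ?_).mono_left ?_
        · rw [hδ', map_sub, D.height_of_mem_S hs]
          push_cast at hn
          linarith
        · simpa using D.rle_add_of_mem_S hs (x - s)
    rw [inner_add_left] at hβγs
    rcases lt_or_ge 0 ⟪β, s⟫ with hβs | hβs
    · exact step hβ hγ rfl hβs
    · exact (step hγ hβ (add_comm γ β) (by linarith)).symm

end RootSystemData

/-- If `α, β, γ ∈ Φ⁺` with `β + γ ∈ Φ⁺` and `α ≤ β + γ` in the root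
poset, then `α ≤ β`, or `α ≤ γ`, or `α = β′ + γ′` with `β′, γ′ ∈ Φ⁺`, `β′ ≤ β`, `γ′ ≤ γ`. -/
theorem statement1 {V : Type*} [NormedAddCommGroup V] [InnerProductSpace ℝ V]
    (D : RootSystemData V) (α β γ : V) (hα : α ∈ D.pos) (hβ : β ∈ D.pos) (hγ : γ ∈ D.pos)
    (hβγ : β + γ ∈ D.pos) (h : D.rle α (β + γ)) :
    D.rle α β ∨ D.rle α γ ∨
      ∃ β' γ', β' ∈ D.pos ∧ γ' ∈ D.pos ∧ α = β' + γ' ∧ D.rle β' β ∧ D.rle γ' γ := by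
  obtain ⟨n, hn⟩ := exists_nat_gt (D.height (β + γ - α))
  exact D.splitsAlong_of_height_lt n hα hβ hγ hβγ h hn
end

section
/- Let 𝓘 be a geometric chain of k ideals with extension 𝓘̲ to a positive geometric chain of k+1 ideals as above. If r_α(𝓘̲) ≤ k for some α ∈ Φ⁺, then r_α(𝓘̲) = r_α(𝓘). -/
open scoped Pointwise RealInnerProductSpace

/-!
Every expression `α = α₁ + … + α_m` with `αᵢ ∈ I (rᵢ)` is also one for `𝓘̲`, since `𝓘̲` agrees
with `𝓘` in ranks `≤ k`; conversely, an expression for `𝓘̲` of total rank `≤ k` uses only ranks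
`rᵢ ≤ k`, hence only the ideals of `𝓘`.
-/

namespace RootSystemData

variable {V : Type*} [NormedAddCommGroup V] [InnerProductSpace ℝ V] (D : RootSystemData V)

theorem Ibar_of_le {k i : ℕ} (I : ℕ → Set V) (hi : i ≤ k) : D.Ibar k I i = I i := if_pos hi

theorem rVals_mono {k k' : ℕ} {I I' : ℕ → Set V} (hk : k ≤ k')
    (hI : ∀ i, 1 ≤ i → i ≤ k → I i ⊆ I' i) (α : V) :
    D.rVals k I α ⊆ D.rVals k' I' α := by
  rintro N ⟨m, a, r, hr, hsum, hN⟩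
  exact ⟨m, a, r, fun i => ⟨(hr i).1, (hr i).2.1.trans hk,
    hI _ (hr i).1 (hr i).2.1 (hr i).2.2⟩, hsum, hN⟩

theorem mem_rVals_of_le {k k' N : ℕ} {I : ℕ → Set V} {α : V}
    (hN : N ∈ D.rVals k' I α) (hNk : N ≤ k) : N ∈ D.rVals k I α := by
  obtain ⟨m, a, r, hr, hsum, rfl⟩ := hN
  refine ⟨m, a, r, fun i => ⟨(hr i).1, ?_, (hr i).2.2⟩, hsum, rfl⟩
  exact (Finset.single_le_sum (fun j _ => Nat.zero_le (r j)) (Finset.mem_univ i)).trans hNk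

end RootSystemData

theorem statement7_general {V : Type*} [NormedAddCommGroup V] [InnerProductSpace ℝ V]
    (D : RootSystemData V) (k : ℕ) (I : ℕ → Set V)
    (α : V) (r : ℕ)
    (hr : IsLeast (D.rVals (k + 1) (D.Ibar k I) α) r) (hrk : r ≤ k) :
    IsLeast (D.rVals k I α) r := by
  constructor
  · exact D.rVals_mono le_rfl (fun i _ hi => (D.Ibar_of_le I hi).subset) α
      (D.mem_rVals_of_le hr.1 hrk)
  · exact fun N hN => hr.2 <|
      D.rVals_mono k.le_succ (fun i _ hi => (D.Ibar_of_le I hi).superset) α hN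

/-- If `r_α(𝓘̲) ≤ k` for some `α ∈ Φ⁺`, then `r_α(𝓘̲) = r_α(𝓘)`. -/
theorem statement7 {V : Type*} [NormedAddCommGroup V] [InnerProductSpace ℝ V]
    (D : RootSystemData V) (k : ℕ) (I : ℕ → Set V) (h : D.IsGeomChain k I)
    (α : V) (hα : α ∈ D.pos) (r : ℕ)
    (hr : IsLeast (D.rVals (k + 1) (D.Ibar k I) α) r) (hrk : r ≤ k) :
    IsLeast (D.rVals k I α) r :=
  statement7_general D k I α r hr hrk
end
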